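/- Let J > 0, β > 3, and let x_s ∈ (0,1/3) and x_l ∈ (1/3,1/2) satisfy ξ(x_s) = ξ(x_l) = β. If J > (β − 1/x_l)/(β + 1/x_l), then (x_s, x_s, x_s, x_s) is a local minimum of F_{β,J} and (x_l, x_l, x_l, x_l) is a critical point of F_{β,J} that is neither a local minimum nor a local maximum (a saddle point). -/

import Mathlib

/-!
Around a diagonal point `(a, a, a, a)` the free energy splits exactly into its value there, a
linear term whose coefficient vanishes iff `ξ(a) = β`, a quadratic energy form, and `(1 + J) / β`
times second-order Taylor remainders of `t log t`. By the Lagrange form, such a remainder lies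
between `(s - t)² / (2 max(s, t))` and `(s - t)² / (2 min(s, t))`.

At `x_s` the lower bound beats the energy form in each of its four eigendirections, because
`β x_s < 1` and `3 β x_s (1 - 2 x_s) < 1`; both follow from `ξ(x_s) = β` through `u < sinh u`.
At `x_l` one has `β x_l > 1`, so `F` decreases along `(1, -1, 1, -1)`, while along
`(1, -1, -1, 1)` it increases exactly when `J > ψ₁(β)`.
-/

open Real Set

/-- ξ(x) = (1/(1−3x)) log((1−2x)/x), continuously extended by ξ(1/3) = 3. -/
noncomputable def xi (x : ℝ) : ℝ :=
  if x = 1 / 3 then 3 else (1 / (1 - 3 * x)) * Real.log ((1 - 2 * x) / x)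

/-- The three-spin (q = 3) two-component Curie–Weiss–Potts free energy on coordinates
(x₁, x₂, y₁, y₂), with x₃ = 1 − x₁ − x₂ and y₃ = 1 − y₁ − y₂. -/
noncomputable def F3 (β J : ℝ) (x : Fin 4 → ℝ) : ℝ :=
  -(1 / 2) * ((x 0) ^ 2 + (x 1) ^ 2 + (1 - x 0 - x 1) ^ 2
      + (x 2) ^ 2 + (x 3) ^ 2 + (1 - x 2 - x 3) ^ 2)
    - J * (x 0 * x 2 + x 1 * x 3 + (1 - x 0 - x 1) * (1 - x 2 - x 3))
    + ((1 + J) / β) * (x 0 * Real.log (x 0) + x 1 * Real.log (x 1)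
        + (1 - x 0 - x 1) * Real.log (1 - x 0 - x 1)
        + x 2 * Real.log (x 2) + x 3 * Real.log (x 3)
        + (1 - x 2 - x 3) * Real.log (1 - x 2 - x 3))

open Filter Topology

noncomputable def mulLogRemainder (t s : ℝ) : ℝ :=
  s * log s - t * log t - (log t + 1) * (s - t)

@[simp]
lemma mulLogRemainder_self (t : ℝ) : mulLogRemainder t t = 0 := by
  simp [mulLogRemainder]

lemma hasDerivAt_mulLogRemainder_left (s : ℝ) {u : ℝ} (hu : u ≠ 0) :
    HasDerivAt (fun u => mulLogRemainder u s) ((u - s) / u) u := by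
  have h := ((hasDerivAt_id' u).mul (hasDerivAt_log hu)).const_sub (s * log s) |>.sub
    (((hasDerivAt_log hu).add_const 1).mul ((hasDerivAt_id' u).const_sub s))
  exact h.congr_deriv (by field_simp; ring)

/-- Lagrange form of the remainder: `s log s` has second derivative `1 / ξ`. -/
lemma exists_mulLogRemainder_eq_sq_div {t s : ℝ} (ht : 0 < t) (hs : 0 < s) :
    ∃ ξ ∈ uIcc t s, mulLogRemainder t s = (s - t) ^ 2 / (2 * ξ) := by
  -- Cauchy's mean value theorem for `u ↦ mulLogRemainder u s` against `u ↦ (s - u) ^ 2`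
  have hcont : ∀ a b : ℝ, 0 < a → ContinuousOn (fun u => mulLogRemainder u s) (Icc a b) :=
    fun a b ha u hu => (hasDerivAt_mulLogRemainder_left s
      (ha.trans_le hu.1).ne').continuousAt.continuousWithinAt
  have hderiv : ∀ a b : ℝ, 0 < a → ∀ u ∈ Ioo a b,
      HasDerivAt (fun u => mulLogRemainder u s) ((u - s) / u) u :=
    fun a b ha u hu => hasDerivAt_mulLogRemainder_left s (ha.trans hu.1).ne'
  have hsq : ∀ u : ℝ, HasDerivAt (fun u : ℝ => (s - u) ^ 2) (-(2 * (s - u))) u := by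
    intro u
    exact (((hasDerivAt_id' u).const_sub s).pow 2).congr_deriv (by simp)
  rcases eq_or_ne t s with rfl | hts
  · exact ⟨t, left_mem_uIcc, by simp⟩
  obtain ⟨ξ, hξ, hξs, h⟩ : ∃ ξ ∈ uIcc t s, ξ ≠ s ∧
      (s - t) ^ 2 * ((ξ - s) / ξ) = mulLogRemainder t s * (2 * (ξ - s)) := by
    rcases hts.lt_or_gt with hts | hst
    · obtain ⟨ξ, hξ, h⟩ := exists_ratio_hasDerivAt_eq_ratio_slope _ _ hts (hcont t s ht)
        (hderiv t s ht) _ _ (by fun_prop) fun u _ => hsq u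
      rw [mulLogRemainder_self] at h
      exact ⟨ξ, uIcc_of_le hts.le ▸ Ioo_subset_Icc_self hξ, hξ.2.ne, by linear_combination -h⟩
    · obtain ⟨ξ, hξ, h⟩ := exists_ratio_hasDerivAt_eq_ratio_slope _ _ hst (hcont s t hs)
        (hderiv s t hs) _ _ (by fun_prop) fun u _ => hsq u
      rw [mulLogRemainder_self] at h
      exact ⟨ξ, uIcc_of_ge hst.le ▸ Ioo_subset_Icc_self hξ, hξ.1.ne', by linear_combination h⟩
  have hξ0 : 0 < ξ := lt_min ht hs |>.trans_le hξ.1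
  refine ⟨ξ, hξ, ?_⟩
  field_simp at h
  rw [eq_div_iff (by positivity)]
  linarith

lemma sq_div_le_mulLogRemainder {t s m : ℝ} (ht : 0 < t) (hs : 0 < s) (hsm : s ≤ m)
    (htm : t ≤ m) : (s - t) ^ 2 / (2 * m) ≤ mulLogRemainder t s := by
  obtain ⟨ξ, hξ, h⟩ := exists_mulLogRemainder_eq_sq_div ht hs
  rw [h]
  have hξ0 : 0 < ξ := lt_min ht hs |>.trans_le hξ.1
  gcongr
  exact hξ.2.trans (max_le htm hsm)

lemma mulLogRemainder_le_sq_div {t s m : ℝ} (hm : 0 < m) (hms : m ≤ s) (hmt : m ≤ t) :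
    mulLogRemainder t s ≤ (s - t) ^ 2 / (2 * m) := by
  obtain ⟨ξ, hξ, h⟩ := exists_mulLogRemainder_eq_sq_div (hm.trans_le hmt) (hm.trans_le hms)
  rw [h]
  gcongr
  exact (le_min hmt hms).trans hξ.1

lemma log_div_eq_of_xi_eq {β a : ℝ} (ha : a ≠ 1 / 3) (h : xi a = β) :
    log ((1 - 2 * a) / a) = β * (1 - 3 * a) := by
  have h3 : 1 - 3 * a ≠ 0 := fun h0 => ha (by linarith)
  rw [xi, if_neg ha, one_div, inv_mul_eq_iff_eq_mul₀ h3] at h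
  rw [h, mul_comm]

lemma one_lt_mul_of_log_div_eq {β a : ℝ} (ha : 1 / 3 < a) (ha' : a < 1 / 2)
    (h : log ((1 - 2 * a) / a) = β * (1 - 3 * a)) : 1 < β * a := by
  have ha0 : 0 < a := by linarith
  have hy : (1 - 2 * a) / a ≠ 1 := by
    rw [ne_eq, div_eq_one_iff_eq ha0.ne']
    linarith
  have hlog := log_lt_sub_one_of_pos (div_pos (by linarith) ha0) hy
  rw [h, div_sub_one ha0.ne', lt_div_iff₀ ha0] at hlog
  nlinarith

lemma sq_mul_mul_lt_one_of_log_div_eq {β a : ℝ} (hβ : 0 < β) (ha0 : 0 < a) (ha : a < 1 / 3)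
    (h : log ((1 - 2 * a) / a) = β * (1 - 3 * a)) : β ^ 2 * (a * (1 - 2 * a)) < 1 := by
  obtain ⟨u, hu⟩ : ∃ u, u = β * (1 - 3 * a) / 2 := ⟨_, rfl⟩
  have hexp : exp u ^ 2 * a = 1 - 2 * a := by
    rw [sq, ← exp_add, show u + u = β * (1 - 3 * a) by rw [hu]; ring, ← h,
      exp_log (div_pos (by linarith) ha0), div_mul_cancel₀ _ ha0.ne']
  -- `2 u < exp u - exp (-u)` is the inequality `log y < √y - 1 / √y` for `y = exp (2 u) > 1`
  have hsinh := self_lt_sinh_iff.2 (show 0 < u by rw [hu]; nlinarith)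
  rw [sinh_eq, exp_neg, lt_div_iff₀ two_pos, lt_sub_iff_add_lt,
    ← mul_lt_mul_iff_of_pos_left (exp_pos u), mul_add, mul_inv_cancel₀ (exp_pos u).ne'] at hsinh
  have hβa : β * a * exp u < 1 := by
    refine lt_of_mul_lt_mul_right (a := 1 - 3 * a) ?_ (by linarith)
    rw [show u * 2 = β * (1 - 3 * a) by rw [hu]; ring] at hsinh
    nlinarith [mul_lt_mul_of_pos_left hsinh ha0]
  have hβa0 : 0 < β * a * exp u := by positivity
  calc β ^ 2 * (a * (1 - 2 * a)) = (β * a * exp u) ^ 2 := by rw [← hexp]; ring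
    _ < 1 := by nlinarith

/-- `h` is the displacement of `(x₁, x₂, y₁, y₂)`, so `x₃` and `y₃` move by `-(h 0 + h 1)` and
`-(h 2 + h 3)`. -/
noncomputable def energyQuad (J : ℝ) (h : Fin 4 → ℝ) : ℝ :=
  -(1 / 2) * (h 0 ^ 2 + h 1 ^ 2 + (h 0 + h 1) ^ 2 + h 2 ^ 2 + h 3 ^ 2 + (h 2 + h 3) ^ 2)
    - J * (h 0 * h 2 + h 1 * h 3 + (h 0 + h 1) * (h 2 + h 3))

noncomputable def entropyRemainder (a : ℝ) (q : Fin 4 → ℝ) : ℝ :=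
  mulLogRemainder a (q 0) + mulLogRemainder a (q 1)
    + mulLogRemainder (1 - 2 * a) (1 - q 0 - q 1)
    + mulLogRemainder a (q 2) + mulLogRemainder a (q 3)
    + mulLogRemainder (1 - 2 * a) (1 - q 2 - q 3)

noncomputable def diagSlope (β J a : ℝ) : ℝ :=
  (1 + J) * (1 - 3 * a) + (1 + J) / β * (log a - log (1 - 2 * a))

lemma F3_eq_diag_add (β J a : ℝ) (q : Fin 4 → ℝ) :
    F3 β J q = F3 β J ![a, a, a, a] + diagSlope β J a * (q 0 + q 1 + q 2 + q 3 - 4 * a)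
      + energyQuad J (fun i => q i - a) + (1 + J) / β * entropyRemainder a q := by
  simp only [F3, energyQuad, entropyRemainder, diagSlope, mulLogRemainder, Matrix.cons_val]
  rw [show 1 - a - a = 1 - 2 * a by ring]
  ring

lemma F3_add_sub (β J a t s : ℝ) :
    F3 β J ![a + t, a - t, a + s, a - s] = F3 β J ![a, a, a, a] - t ^ 2 - s ^ 2 - 2 * J * t * s
      + (1 + J) / β * (mulLogRemainder a (a + t) + mulLogRemainder a (a - t)
        + mulLogRemainder a (a + s) + mulLogRemainder a (a - s)) := by
  rw [F3_eq_diag_add β J a]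
  simp only [energyQuad, entropyRemainder, Matrix.cons_val]
  rw [show 1 - (a + t) - (a - t) = 1 - 2 * a by ring,
    show 1 - (a + s) - (a - s) = 1 - 2 * a by ring, mulLogRemainder_self]
  ring

lemma diagSlope_eq_zero {β J a : ℝ} (hβ : β ≠ 0) (ha0 : 0 < a) (ha : a < 1 / 2)
    (h : log ((1 - 2 * a) / a) = β * (1 - 3 * a)) : diagSlope β J a = 0 := by
  rw [log_div (by linarith) ha0.ne'] at h
  rw [diagSlope, show log a - log (1 - 2 * a) = -(β * (1 - 3 * a)) by linarith]
  field_simp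
  ring

/-- The form is diagonal in the orthogonal basis `(1,1,1,1)`, `(1,-1,1,-1)`, `(1,1,-1,-1)`,
`(1,-1,-1,1)`; its eigenvalues are (up to the factor `2`) the four coefficients below. -/
lemma energyQuad_add_nonneg {J ka kb : ℝ} (hJ : 0 ≤ J) (hka : 1 + J ≤ ka)
    (hkab : 3 * (1 + J) ≤ ka + 2 * kb) (h : Fin 4 → ℝ) :
    0 ≤ energyQuad J h + ka * (h 0 ^ 2 + h 1 ^ 2 + h 2 ^ 2 + h 3 ^ 2) / 2
      + kb * ((h 0 + h 1) ^ 2 + (h 2 + h 3) ^ 2) / 2 := by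
  have key : energyQuad J h + ka * (h 0 ^ 2 + h 1 ^ 2 + h 2 ^ 2 + h 3 ^ 2) / 2
      + kb * ((h 0 + h 1) ^ 2 + (h 2 + h 3) ^ 2) / 2
      = ((ka + 2 * kb - 3 * (1 + J)) * (h 0 + h 1 + h 2 + h 3) ^ 2
        + (ka - (1 + J)) * (h 0 - h 1 + h 2 - h 3) ^ 2
        + (ka + 2 * kb - 3 * (1 - J)) * (h 0 + h 1 - h 2 - h 3) ^ 2
        + (ka - (1 - J)) * (h 0 - h 1 - h 2 + h 3) ^ 2) / 8 := by
    simp only [energyQuad]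
    ring
  rw [key]
  have := mul_nonneg (sub_nonneg.2 hkab) (sq_nonneg (h 0 + h 1 + h 2 + h 3))
  have := mul_nonneg (sub_nonneg.2 hka) (sq_nonneg (h 0 - h 1 + h 2 - h 3))
  have := mul_nonneg (show 0 ≤ ka + 2 * kb - 3 * (1 - J) by linarith)
    (sq_nonneg (h 0 + h 1 - h 2 - h 3))
  have := mul_nonneg (show 0 ≤ ka - (1 - J) by linarith) (sq_nonneg (h 0 - h 1 - h 2 + h 3))
  linarith

lemma hasFDerivAt_F3_diag (β J : ℝ) {a : ℝ} (ha0 : 0 < a) (ha : a < 1 / 2) :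
    HasFDerivAt (F3 β J)
      (diagSlope β J a • ∑ i, ContinuousLinearMap.proj i : (Fin 4 → ℝ) →L[ℝ] ℝ) ![a, a, a, a] := by
  set c := (1 + J) / β
  let g : ℝ → ℝ := fun t => -(1 / 2) * t ^ 2 + c * (t * log t)
  have hg : ∀ {t : ℝ}, t ≠ 0 → HasDerivAt g (-t + c * (log t + 1)) t := fun ht =>
    (((hasDerivAt_pow 2 _).const_mul _).add
      (((hasDerivAt_id' _).mul (hasDerivAt_log ht)).const_mul c)).congr_deriv
      (by field_simp; ring)
  have hF : F3 β J = fun x => g (x 0) + g (x 1) + g (1 - x 0 - x 1) + g (x 2) + g (x 3)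
      + g (1 - x 2 - x 3) - J * (x 0 * x 2 + x 1 * x 3 + (1 - x 0 - x 1) * (1 - x 2 - x 3)) := by
    ext x
    simp only [F3, g, c]
    ring
  let p : Fin 4 → (Fin 4 → ℝ) →L[ℝ] ℝ := ContinuousLinearMap.proj
  have hp : ∀ i, HasFDerivAt (fun x : Fin 4 → ℝ => x i) (p i) ![a, a, a, a] :=
    fun i => (p i).hasFDerivAt
  have hw : ∀ i j, HasFDerivAt (fun x : Fin 4 → ℝ => 1 - x i - x j) (-p i - p j) ![a, a, a, a] :=
    fun i j => ((hasFDerivAt_const 1 _).sub (hp i)).sub (hp j) |>.congr_fderiv (by simp)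
  have hgf : ∀ {f : (Fin 4 → ℝ) → ℝ} {f' : (Fin 4 → ℝ) →L[ℝ] ℝ}, HasFDerivAt f f' ![a, a, a, a] →
      f ![a, a, a, a] ≠ 0 → HasFDerivAt (g ∘ f)
        ((-f ![a, a, a, a] + c * (log (f ![a, a, a, a]) + 1)) • f') ![a, a, a, a] :=
    fun hf h0 => (hg h0).comp_hasFDerivAt _ hf
  have hw0 : (1 : ℝ) - a - a ≠ 0 := by linarith
  have h := ((((((hgf (hp 0) ha0.ne').add (hgf (hp 1) ha0.ne')).add (hgf (hw 0 1) hw0)).add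
    (hgf (hp 2) ha0.ne')).add (hgf (hp 3) ha0.ne')).add (hgf (hw 2 3) hw0)).sub
    (((((hp 0).mul (hp 2)).add ((hp 1).mul (hp 3))).add ((hw 0 1).mul (hw 2 3))).const_mul J)
  rw [hF]
  refine h.congr_fderiv ?_
  ext v
  simp only [Matrix.cons_val_zero, Matrix.cons_val_one, Matrix.cons_val, neg_sub, smul_add,
    sub_apply, add_apply, smul_apply, ContinuousLinearMap.proj_apply, smul_eq_mul, neg_apply,
    diagSlope, Fin.sum_univ_four, p]
  rw [show 1 - a - a = 1 - 2 * a by ring]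
  ring

lemma sq_div_le_entropyRemainder {a m₁ m₂ : ℝ} {q : Fin 4 → ℝ} (ha0 : 0 < a)
    (ha : a < 1 / 2) (ham : a ≤ m₁) (hwm : 1 - 2 * a ≤ m₂) (hq : ∀ i, q i ∈ Ioc 0 m₁)
    (hw₁ : 1 - q 0 - q 1 ∈ Ioc 0 m₂) (hw₂ : 1 - q 2 - q 3 ∈ Ioc 0 m₂) :
    ((q 0 - a) ^ 2 + (q 1 - a) ^ 2 + (q 2 - a) ^ 2 + (q 3 - a) ^ 2) / (2 * m₁)
      + ((q 0 - a + (q 1 - a)) ^ 2 + (q 2 - a + (q 3 - a)) ^ 2) / (2 * m₂)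
      ≤ entropyRemainder a q := by
  have hw : 0 < 1 - 2 * a := by linarith
  have hx := fun i => sq_div_le_mulLogRemainder ha0 (hq i).1 (hq i).2 ham
  have hy₁ := sq_div_le_mulLogRemainder hw hw₁.1 hw₁.2 hwm
  have hy₂ := sq_div_le_mulLogRemainder hw hw₂.1 hw₂.2 hwm
  rw [show 1 - q 0 - q 1 - (1 - 2 * a) = -(q 0 - a + (q 1 - a)) by ring, neg_sq] at hy₁
  rw [show 1 - q 2 - q 3 - (1 - 2 * a) = -(q 2 - a + (q 3 - a)) by ring, neg_sq] at hy₂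
  simp only [entropyRemainder, add_div]
  linarith [hx 0, hx 1, hx 2, hx 3]

lemma isLocalMin_F3_diag {β J a : ℝ} (hβ : 0 < β) (hJ : 0 ≤ J) (ha0 : 0 < a) (ha : a < 1 / 2)
    (hslope : diagSlope β J a = 0) (hβa : β * a < 1) (h3 : 3 * β < 1 / a + 2 / (1 - 2 * a)) :
    IsLocalMin (F3 β J) ![a, a, a, a] := by
  obtain ⟨r, hβr, h3r, hr0⟩ : ∃ r, β * (a + r) < 1
      ∧ 3 * β < 1 / (a + r) + 2 / (1 - 2 * a + r) ∧ 0 < r := by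
    have h₁ : ∀ᶠ r in 𝓝 (0 : ℝ), β * (a + r) < 1 :=
      ContinuousAt.eventually_lt (by fun_prop) continuousAt_const (by simpa using hβa)
    have h₂ : ∀ᶠ r in 𝓝 (0 : ℝ), 3 * β < 1 / (a + r) + 2 / (1 - 2 * a + r) :=
      ContinuousAt.eventually_lt continuousAt_const
        (by fun_prop (disch := simp only [add_zero]; linarith)) (by simpa using h3)
    exact ((h₁.and h₂).filter_mono nhdsWithin_le_nhds |>.and
      (self_mem_nhdsWithin (s := Ioi 0))).exists.imp fun _ h => ⟨h.1.1, h.1.2, h.2⟩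
  have hx : ∀ i, (![a, a, a, a] : Fin 4 → ℝ) i = a := fun i => by fin_cases i <;> rfl
  have hq : ∀ᶠ q in 𝓝 ![a, a, a, a], ∀ i, q i ∈ Ioo 0 (a + r) :=
    eventually_all.2 fun i => (continuous_apply i).continuousAt.eventually_mem
      (Ioo_mem_nhds (by simp [hx, ha0]) (by simp [hx, hr0]))
  have hw : ∀ i j, ∀ᶠ q in 𝓝 ![a, a, a, a], 1 - q i - q j ∈ Ioo 0 (1 - 2 * a + r) :=
    fun i j => ((continuous_const.sub (continuous_apply i)).sub
      (continuous_apply j)).continuousAt.eventually_mem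
        (Ioo_mem_nhds (by simp [hx]; linarith) (by simp [hx]; linarith))
  filter_upwards [hq, hw 0 1, hw 2 3] with q hq hw₁ hw₂
  have hER := sq_div_le_entropyRemainder (m₁ := a + r) (m₂ := 1 - 2 * a + r) ha0 ha
    (by linarith) (by linarith) (fun i => Ioo_subset_Ioc_self (hq i))
    (Ioo_subset_Ioc_self hw₁) (Ioo_subset_Ioc_self hw₂)
  set c := (1 + J) / β
  have hc : 0 ≤ c := by positivity
  have hka : 1 + J ≤ c / (a + r) := by
    rw [div_div, le_div_iff₀ (by positivity)]
    nlinarith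
  have hkab : 3 * (1 + J) ≤ c / (a + r) + 2 * (c / (1 - 2 * a + r)) := by
    calc 3 * (1 + J) = c * (3 * β) := by simp only [c]; field_simp
      _ ≤ c * (1 / (a + r) + 2 / (1 - 2 * a + r)) := by gcongr
      _ = c / (a + r) + 2 * (c / (1 - 2 * a + r)) := by ring
  have hT := energyQuad_add_nonneg hJ hka hkab (fun i => q i - a)
  rw [F3_eq_diag_add β J a q, hslope, zero_mul, add_zero]
  have := mul_le_mul_of_nonneg_left hER hc
  have e : c * (((q 0 - a) ^ 2 + (q 1 - a) ^ 2 + (q 2 - a) ^ 2 + (q 3 - a) ^ 2) / (2 * (a + r))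
      + ((q 0 - a + (q 1 - a)) ^ 2 + (q 2 - a + (q 3 - a)) ^ 2) / (2 * (1 - 2 * a + r)))
      = c / (a + r) * ((q 0 - a) ^ 2 + (q 1 - a) ^ 2 + (q 2 - a) ^ 2 + (q 3 - a) ^ 2) / 2
        + c / (1 - 2 * a + r) * ((q 0 - a + (q 1 - a)) ^ 2 + (q 2 - a + (q 3 - a)) ^ 2) / 2 := by
    field_simp
  linarith

lemma not_isLocalMin_of_tendsto {X ι β : Type*} [TopologicalSpace X] [Preorder β] {f : X → β}
    {x : X} {l : Filter ι} [l.NeBot] {γ : ι → X} (hγ : Tendsto γ l (𝓝 x))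
    (h : ∀ᶠ t in l, f (γ t) < f x) : ¬IsLocalMin f x := fun hmin =>
  let ⟨_, hle, hlt⟩ := ((hγ.eventually hmin).and h).exists
  hlt.not_ge hle

lemma not_isLocalMax_of_tendsto {X ι β : Type*} [TopologicalSpace X] [Preorder β] {f : X → β}
    {x : X} {l : Filter ι} [l.NeBot] {γ : ι → X} (hγ : Tendsto γ l (𝓝 x))
    (h : ∀ᶠ t in l, f x < f (γ t)) : ¬IsLocalMax f x := fun hmax =>
  let ⟨_, hle, hlt⟩ := ((hγ.eventually hmax).and h).exists
  hlt.not_ge hle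

lemma tendsto_diag_add_sub (a : ℝ) (ε : ℝ) :
    Tendsto (fun t : ℝ => ![a + t, a - t, a + ε * t, a - ε * t]) (𝓝[>] 0) (𝓝 ![a, a, a, a]) :=
  ((by fun_prop : Continuous fun t : ℝ => ![a + t, a - t, a + ε * t, a - ε * t]).tendsto' 0 _
    (by simp)).mono_left nhdsWithin_le_nhds

lemma not_isLocalMin_F3_diag {β J a : ℝ} (hβ : 0 < β) (hJ : 0 < 1 + J) (hβa : 1 < β * a) :
    ¬IsLocalMin (F3 β J) ![a, a, a, a] := by
  refine not_isLocalMin_of_tendsto (tendsto_diag_add_sub a 1) ?_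
  have hδ : 0 < a - 1 / β := by
    rw [sub_pos, div_lt_iff₀ hβ]
    linarith
  filter_upwards [self_mem_nhdsWithin, nhdsWithin_le_nhds (eventually_lt_nhds hδ)]
    with t (ht : 0 < t) htδ
  have hm : 1 < β * (a - t) := by
    rw [lt_sub_comm, div_lt_iff₀ hβ] at htδ
    linarith
  have hm0 : 0 < a - t := pos_of_mul_pos_right (one_pos.trans hm) hβ.le
  have hR : mulLogRemainder a (a + t) + mulLogRemainder a (a - t) ≤ t ^ 2 / (a - t) := by
    have hplus := mulLogRemainder_le_sq_div hm0 (by linarith : a - t ≤ a + t)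
      (by linarith : a - t ≤ a)
    have hminus := mulLogRemainder_le_sq_div hm0 le_rfl (by linarith : a - t ≤ a)
    have e : t ^ 2 / (a - t)
        = (a + t - a) ^ 2 / (2 * (a - t)) + (a - t - a) ^ 2 / (2 * (a - t)) := by
      field_simp
      ring
    linarith
  have key : (1 + J) / β * (t ^ 2 / (a - t)) < (1 + J) * t ^ 2 := by
    rw [div_mul_div_comm, div_lt_iff₀ (by positivity)]
    have : 0 < (1 + J) * t ^ 2 := by positivity
    nlinarith
  calc F3 β J ![a + t, a - t, a + 1 * t, a - 1 * t]
      = F3 β J ![a, a, a, a] - 2 * (1 + J) * t ^ 2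
        + 2 * ((1 + J) / β * (mulLogRemainder a (a + t) + mulLogRemainder a (a - t))) := by
        rw [one_mul, F3_add_sub]
        ring
    _ ≤ F3 β J ![a, a, a, a] - 2 * (1 + J) * t ^ 2 + 2 * ((1 + J) / β * (t ^ 2 / (a - t))) := by
        gcongr
    _ < F3 β J ![a, a, a, a] := by linarith

lemma not_isLocalMax_F3_diag {β J a : ℝ} (hβ : 0 < β) (ha : 0 < a)
    (hJ : β * a - 1 < J * (β * a + 1)) : ¬IsLocalMax (F3 β J) ![a, a, a, a] := by
  refine not_isLocalMax_of_tendsto (tendsto_diag_add_sub a (-1)) ?_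
  have hJ1 : 0 < 1 + J := by nlinarith [mul_pos hβ ha]
  have hmargin : ∀ᶠ t in 𝓝 (0 : ℝ), (1 - J) * β * (a + t) < 1 + J :=
    ContinuousAt.eventually_lt (by fun_prop) continuousAt_const (by linarith)
  filter_upwards [self_mem_nhdsWithin, nhdsWithin_le_nhds (eventually_lt_nhds ha),
    nhdsWithin_le_nhds hmargin] with t (ht : 0 < t) hta htm
  have hR : t ^ 2 / (a + t) ≤ mulLogRemainder a (a + t) + mulLogRemainder a (a - t) := by
    have hplus := sq_div_le_mulLogRemainder ha (by linarith : 0 < a + t) le_rfl (by linarith)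
    have hminus := sq_div_le_mulLogRemainder ha (by linarith : 0 < a - t) (by linarith)
      (by linarith : a ≤ a + t)
    have e : t ^ 2 / (a + t)
        = (a + t - a) ^ 2 / (2 * (a + t)) + (a - t - a) ^ 2 / (2 * (a + t)) := by
      field_simp
      ring
    linarith
  have key : (1 - J) * t ^ 2 < (1 + J) / β * (t ^ 2 / (a + t)) := by
    rw [div_mul_div_comm, lt_div_iff₀ (by positivity)]
    have : 0 < t ^ 2 := by positivity
    nlinarith
  calc F3 β J ![a, a, a, a]
      < F3 β J ![a, a, a, a] - 2 * (1 - J) * t ^ 2 + 2 * ((1 + J) / β * (t ^ 2 / (a + t))) := by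
        linarith
    _ ≤ F3 β J ![a, a, a, a] - 2 * (1 - J) * t ^ 2
        + 2 * ((1 + J) / β * (mulLogRemainder a (a + t) + mulLogRemainder a (a - t))) := by
        gcongr
    _ = F3 β J ![a + t, a - t, a + -1 * t, a - -1 * t] := by
        rw [F3_add_sub, neg_one_mul, sub_neg_eq_add, ← sub_eq_add_neg]
        ring

/-- low-temperature regime: for β > 3, x_s ∈ (0,1/3), x_l ∈ (1/3,1/2)
with ξ(x_s) = ξ(x_l) = β and J > ψ₁(β) = (β − 1/x_l)/(β + 1/x_l), the point
(x_s,x_s,x_s,x_s) is a local minimum of F_{β,J} and (x_l,x_l,x_l,x_l) is a critical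
point which is neither a local minimum nor a local maximum (a saddle point). -/
theorem stmt_15 (β J xs xl : ℝ) (hJ : 0 < J) (hβ : 3 < β)
    (hxs : xs ∈ Ioo (0 : ℝ) (1 / 3)) (hxl : xl ∈ Ioo (1 / 3 : ℝ) (1 / 2))
    (hξs : xi xs = β) (hξl : xi xl = β)
    (hJψ : (β - 1 / xl) / (β + 1 / xl) < J) :
    IsLocalMin (F3 β J) ![xs, xs, xs, xs] ∧
    (fderiv ℝ (F3 β J) ![xl, xl, xl, xl] = 0 ∧
      ¬ IsLocalMin (F3 β J) ![xl, xl, xl, xl] ∧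
      ¬ IsLocalMax (F3 β J) ![xl, xl, xl, xl]) := by
  obtain ⟨hxs0, hxs3⟩ := hxs
  obtain ⟨hxl3, hxl2⟩ := hxl
  have hβ0 : 0 < β := by linarith
  have hxl0 : 0 < xl := by linarith
  have hlogs := log_div_eq_of_xi_eq hxs3.ne hξs
  have hlogl := log_div_eq_of_xi_eq hxl3.ne' hξl
  have hβxs := sq_mul_mul_lt_one_of_log_div_eq hβ0 hxs0 hxs3 hlogs
  have hβxl := one_lt_mul_of_log_div_eq hxl3 hxl2 hlogl
  have hψ : (β - 1 / xl) / (β + 1 / xl) = (β * xl - 1) / (β * xl + 1) := by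
    field_simp
  rw [hψ, div_lt_iff₀ (by positivity)] at hJψ
  have hβxs1 : β * xs < 1 := by
    nlinarith [mul_pos (mul_pos (pow_pos hβ0 2) hxs0) (show (0 : ℝ) < 1 - 3 * xs by linarith)]
  refine ⟨isLocalMin_F3_diag hβ0 hJ.le hxs0 (by linarith)
    (diagSlope_eq_zero hβ0.ne' hxs0 (by linarith) hlogs) hβxs1 ?_, ?_,
    not_isLocalMin_F3_diag hβ0 (by linarith) hβxl, not_isLocalMax_F3_diag hβ0 hxl0 hJψ⟩
  · rw [div_add_div _ _ hxs0.ne' (by linarith), lt_div_iff₀ (by nlinarith)]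
    nlinarith
  · have h := hasFDerivAt_F3_diag β J hxl0 hxl2
    rw [diagSlope_eq_zero hβ0.ne' hxl0 hxl2 hlogl, zero_smul] at h
    exact h.fderiv
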